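/- Let 2 ≤ k ≤ K be integers. Then in ℝ[A_K] one has the identities S(Δ_k^C) = (K−1)!·k·Δ_K^C and S(Δ_k^N) = (K−2)!·(k−1)·k·Δ_K^N. -/

import Mathlib

noncomputable section

namespace PRA

open FreeGroup

variable {α : Type*} [DecidableEq α]

/-- The endomorphism of the free group sending `x_i ↦ x_j x_i` and fixing other generators. -/
def lA (i j : α) : FreeGroup α →* FreeGroup α :=
  FreeGroup.lift fun p => if p = i then FreeGroup.of j * FreeGroup.of p else FreeGroup.of p

/-- The endomorphism of the free group sending `x_i ↦ x_j⁻¹ x_i` and fixing other generators. -/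
def lB (i j : α) : FreeGroup α →* FreeGroup α :=
  FreeGroup.lift fun p => if p = i then (FreeGroup.of j)⁻¹ * FreeGroup.of p else FreeGroup.of p

/-- The endomorphism of the free group sending `x_i ↦ x_i x_j` and fixing other generators. -/
def rA (i j : α) : FreeGroup α →* FreeGroup α :=
  FreeGroup.lift fun p => if p = i then FreeGroup.of p * FreeGroup.of j else FreeGroup.of p

/-- The endomorphism of the free group sending `x_i ↦ x_i x_j⁻¹` and fixing other generators. -/
def rB (i j : α) : FreeGroup α →* FreeGroup α :=
  FreeGroup.lift fun p => if p = i then FreeGroup.of p * (FreeGroup.of j)⁻¹ else FreeGroup.of p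

lemma lBA (i j : α) (h : i ≠ j) : (lB i j).comp (lA i j) = MonoidHom.id _ := by
  ext p
  by_cases hp : p = i
  · subst hp
    simp [lA, lB, Ne.symm h]
  · simp [lA, lB, hp]

lemma lAB (i j : α) (h : i ≠ j) : (lA i j).comp (lB i j) = MonoidHom.id _ := by
  ext p
  by_cases hp : p = i
  · subst hp
    simp [lA, lB, Ne.symm h]
  · simp [lA, lB, hp]

lemma rBA (i j : α) (h : i ≠ j) : (rB i j).comp (rA i j) = MonoidHom.id _ := by
  ext p
  by_cases hp : p = i
  · subst hp
    simp [rA, rB, Ne.symm h]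
  · simp [rA, rB, hp]

lemma rAB (i j : α) (h : i ≠ j) : (rA i j).comp (rB i j) = MonoidHom.id _ := by
  ext p
  by_cases hp : p = i
  · subst hp
    simp [rA, rB, Ne.symm h]
  · simp [rA, rB, hp]

/-- The Nielsen automorphism `L_{ij} : x_i ↦ x_j x_i` (defined to be `1` when `i = j`). -/
def nL (i j : α) : MulAut (FreeGroup α) :=
  if h : i = j then 1
  else MonoidHom.toMulEquiv (lA i j) (lB i j) (lBA i j h) (lAB i j h)

/-- The Nielsen automorphism `R_{ij} : x_i ↦ x_i x_j` (defined to be `1` when `i = j`). -/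
def nR (i j : α) : MulAut (FreeGroup α) :=
  if h : i = j then 1
  else MonoidHom.toMulEquiv (rA i j) (rB i j) (rBA i j h) (rAB i j h)

/-- The generating set of the group `A_k`: Nielsen automorphisms `L_{ij}^±`, `R_{ij}^±`
of `F_{k+1} = ⟨x_0, x_1, …, x_k⟩` with `i ≠ j` and `j ≠ 0`
(i.e. the C-generators, with `i = 0`, and the N-generators, with `i, j ≥ 1`). -/
def AgenSet (k : ℕ) : Set (MulAut (FreeGroup (Fin (k + 1)))) :=
  {φ | ∃ i j : Fin (k + 1), i ≠ j ∧ j ≠ 0 ∧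
    (φ = nL i j ∨ φ = (nL i j)⁻¹ ∨ φ = nR i j ∨ φ = (nR i j)⁻¹)}

/-- The group `A_k ≤ Aut(F_{k+1})`. -/
def Ak (k : ℕ) : Subgroup (MulAut (FreeGroup (Fin (k + 1)))) :=
  Subgroup.closure (AgenSet k)

lemma nL_mem {k : ℕ} (i j : Fin (k + 1)) (hj : j ≠ 0) : nL i j ∈ Ak k := by
  by_cases h : i = j
  · subst h
    rw [nL, dif_pos rfl]
    exact (Ak k).one_mem
  · exact Subgroup.subset_closure ⟨i, j, h, hj, Or.inl rfl⟩

lemma nR_mem {k : ℕ} (i j : Fin (k + 1)) (hj : j ≠ 0) : nR i j ∈ Ak k := by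
  by_cases h : i = j
  · subst h
    rw [nR, dif_pos rfl]
    exact (Ak k).one_mem
  · exact Subgroup.subset_closure ⟨i, j, h, hj, Or.inr (Or.inr (Or.inl rfl))⟩

/-- `L_{ij}` as an element of the group `A_k`. -/
def Lg {k : ℕ} (i j : Fin (k + 1)) (hj : j ≠ 0) : Ak k := ⟨nL i j, nL_mem i j hj⟩

/-- `R_{ij}` as an element of the group `A_k`. -/
def Rg {k : ℕ} (i j : Fin (k + 1)) (hj : j ≠ 0) : Ak k := ⟨nR i j, nR_mem i j hj⟩

end PRA
namespace PRA

/-- The `*`-operation on the real group ring `ℝ[G]`: the linear extension of `g ↦ g⁻¹`. -/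
def gstar {G : Type*} [Group G] (ξ : MonoidAlgebra ℝ G) : MonoidAlgebra ℝ G :=
  MonoidAlgebra.mapDomain (fun g : G => g⁻¹) ξ

/-- An element of `ℝ[G]` is a sum of squares if it equals `Σ_i ξ_i* ξ_i`
for finitely many `ξ_i ∈ ℝ[G]`. -/
def IsSOS {G : Type*} [Group G] (ξ : MonoidAlgebra ℝ G) : Prop :=
  ∃ (n : ℕ) (f : Fin n → MonoidAlgebra ℝ G), ξ = ∑ m : Fin n, gstar (f m) * f m

variable {K : ℕ}

/-- The partial Laplacian
`Δ_{ij} = (1−L_{ij})(1−L_{ij})* + (1−R_{ij})(1−R_{ij})* ∈ ℝ[A_K]`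
(for `i = j` both Nielsen automorphisms are `1` and `Δ_{ii} = 0`). -/
def Del (K : ℕ) (i j : Fin (K + 1)) (hj : j ≠ 0) : MonoidAlgebra ℝ (Ak K) :=
  (1 - MonoidAlgebra.of ℝ (Ak K) (Lg i j hj)) *
      gstar (1 - MonoidAlgebra.of ℝ (Ak K) (Lg i j hj)) +
    (1 - MonoidAlgebra.of ℝ (Ak K) (Rg i j hj)) *
      gstar (1 - MonoidAlgebra.of ℝ (Ak K) (Rg i j hj))

/-- The embedding of the index range `{1,…,m}` into `{0,1,…,K}` for `m ≤ K`. -/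
def idx {K m : ℕ} (h : m ≤ K) (s : Fin m) : Fin (K + 1) :=
  (Fin.castLE h s).succ

lemma idx_ne_zero {K m : ℕ} (h : m ≤ K) (s : Fin m) : idx h s ≠ 0 :=
  Fin.succ_ne_zero _

/-- `Δ_m^C = Σ_{s=1}^m Δ_{0s}`, as an element of `ℝ[A_K]`. -/
def DelC (K m : ℕ) (h : m ≤ K) : MonoidAlgebra ℝ (Ak K) :=
  ∑ s : Fin m, Del K 0 (idx h s) (idx_ne_zero h s)

/-- `Δ_m^N = Σ_{1 ≤ i,j ≤ m} Δ_{ij}`, as an element of `ℝ[A_K]`. -/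
def DelN (K m : ℕ) (h : m ≤ K) : MonoidAlgebra ℝ (Ak K) :=
  ∑ i : Fin m, ∑ j : Fin m, Del K (idx h i) (idx h j) (idx_ne_zero h j)

/-- The full non-normalized group Laplacian `Δ_K = Δ_K^C + Δ_K^N ∈ ℝ[A_K]`. -/
def DelFull (K : ℕ) : MonoidAlgebra ℝ (Ak K) :=
  DelC K K le_rfl + DelN K K le_rfl

end PRA
set_option linter.unusedSectionVars false

namespace PRA

variable {α : Type*} [DecidableEq α]

/-- The automorphism of the free group induced by a permutation of the generators. -/
def permAut (e : α ≃ α) : MulAut (FreeGroup α) := FreeGroup.freeGroupCongr e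

lemma permAut_apply_of (e : α ≃ α) (a : α) :
    permAut e (FreeGroup.of a) = FreeGroup.of (e a) := by
  simp [permAut]

lemma permAut_inv_apply_of (e : α ≃ α) (a : α) :
    (permAut e)⁻¹ (FreeGroup.of a) = FreeGroup.of (e.symm a) := by
  show ((permAut e).symm) (FreeGroup.of a) = _
  rw [permAut, FreeGroup.freeGroupCongr_symm]
  exact permAut_apply_of e.symm a

lemma nL_apply_of {i j : α} (h : i ≠ j) (a : α) :
    nL i j (FreeGroup.of a)
      = if a = i then FreeGroup.of j * FreeGroup.of a else FreeGroup.of a := by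
  rw [nL, dif_neg h]
  show lA i j (FreeGroup.of a) = _
  simp [lA]

lemma nR_apply_of {i j : α} (h : i ≠ j) (a : α) :
    nR i j (FreeGroup.of a)
      = if a = i then FreeGroup.of a * FreeGroup.of j else FreeGroup.of a := by
  rw [nR, dif_neg h]
  show rA i j (FreeGroup.of a) = _
  simp [rA]

lemma permAut_conj_nL (e : α ≃ α) (i j : α) :
    permAut e * nL i j * (permAut e)⁻¹ = nL (e i) (e j) := by
  by_cases h : i = j
  · subst h
    rw [nL, dif_pos rfl, nL, dif_pos rfl, mul_one, mul_inv_cancel]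
  · have h' : e i ≠ e j := fun hc => h (e.injective hc)
    apply MulEquiv.toMonoidHom_injective
    apply FreeGroup.ext_hom
    intro a
    show (permAut e) (nL i j ((permAut e)⁻¹ (FreeGroup.of a))) = nL (e i) (e j) (FreeGroup.of a)
    rw [permAut_inv_apply_of, nL_apply_of h, nL_apply_of h']
    by_cases ha : a = e i
    · rw [if_pos (by rw [ha, Equiv.symm_apply_apply]), if_pos ha, map_mul,
        permAut_apply_of, permAut_apply_of, ha, Equiv.apply_symm_apply]
    · rw [if_neg (fun hc => ha (by rw [← e.apply_symm_apply a, hc])), if_neg ha,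
        permAut_apply_of, Equiv.apply_symm_apply]

lemma permAut_conj_nR (e : α ≃ α) (i j : α) :
    permAut e * nR i j * (permAut e)⁻¹ = nR (e i) (e j) := by
  by_cases h : i = j
  · subst h
    rw [nR, dif_pos rfl, nR, dif_pos rfl, mul_one, mul_inv_cancel]
  · have h' : e i ≠ e j := fun hc => h (e.injective hc)
    apply MulEquiv.toMonoidHom_injective
    apply FreeGroup.ext_hom
    intro a
    show (permAut e) (nR i j ((permAut e)⁻¹ (FreeGroup.of a))) = nR (e i) (e j) (FreeGroup.of a)
    rw [permAut_inv_apply_of, nR_apply_of h, nR_apply_of h']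
    by_cases ha : a = e i
    · rw [if_pos (by rw [ha, Equiv.symm_apply_apply]), if_pos ha, map_mul,
        permAut_apply_of, permAut_apply_of, ha, Equiv.apply_symm_apply]
    · rw [if_neg (fun hc => ha (by rw [← e.apply_symm_apply a, hc])), if_neg ha,
        permAut_apply_of, Equiv.apply_symm_apply]

lemma conjA_mem {k : ℕ} (e : Fin (k + 1) ≃ Fin (k + 1)) (he : e 0 = 0)
    {ψ : MulAut (FreeGroup (Fin (k + 1)))} (hψ : ψ ∈ Ak k) :
    permAut e * ψ * (permAut e)⁻¹ ∈ Ak k := by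
  induction hψ using Subgroup.closure_induction with
  | mem x hx =>
      obtain ⟨i, j, hij, hj, hx⟩ := hx
      have hij' : e i ≠ e j := fun hc => hij (e.injective hc)
      have hj' : e j ≠ 0 := fun hc => hj (e.injective (by rw [hc, he]))
      rcases hx with rfl | rfl | rfl | rfl
      · exact Subgroup.subset_closure ⟨e i, e j, hij', hj', Or.inl (permAut_conj_nL e i j)⟩
      · refine Subgroup.subset_closure ⟨e i, e j, hij', hj', Or.inr (Or.inl ?_)⟩
        rw [← permAut_conj_nL e i j]; group
      · exact Subgroup.subset_closure
          ⟨e i, e j, hij', hj', Or.inr (Or.inr (Or.inl (permAut_conj_nR e i j)))⟩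
      · refine Subgroup.subset_closure ⟨e i, e j, hij', hj', Or.inr (Or.inr (Or.inr ?_))⟩
        rw [← permAut_conj_nR e i j]; group
  | one =>
      have h1 : permAut e * 1 * (permAut e)⁻¹ = 1 := by group
      rw [h1]; exact (Ak k).one_mem
  | mul x y _ _ ihx ihy =>
      have hmul : permAut e * (x * y) * (permAut e)⁻¹
          = (permAut e * x * (permAut e)⁻¹) * (permAut e * y * (permAut e)⁻¹) := by group
      rw [hmul]; exact (Ak k).mul_mem ihx ihy
  | inv x _ ihx =>
      have hinv : permAut e * x⁻¹ * (permAut e)⁻¹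
          = (permAut e * x * (permAut e)⁻¹)⁻¹ := by group
      rw [hinv]; exact (Ak k).inv_mem ihx

/-- The permutation of `{0, 1, …, K}` induced by a permutation of `{1, …, K}` fixing `0`. -/
def extPerm (K : ℕ) (σ : Equiv.Perm (Fin K)) : Equiv.Perm (Fin (K + 1)) :=
  (finSuccEquiv K).trans ((Equiv.optionCongr σ).trans (finSuccEquiv K).symm)

lemma extPerm_zero (K : ℕ) (σ : Equiv.Perm (Fin K)) : extPerm K σ 0 = 0 := by
  simp [extPerm]

/-- The action of a permutation `σ ∈ S_K` on `A_K` by conjugation by the automorphism of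
`F_{K+1}` permuting `x_1, …, x_K` according to `σ` and fixing `x_0`;
it satisfies `σ.L_{ij} = L_{σ(i)σ(j)}` and `σ.R_{ij} = R_{σ(i)σ(j)}`. -/
def conjPerm (K : ℕ) (σ : Equiv.Perm (Fin K)) (ψ : Ak K) : Ak K :=
  ⟨permAut (extPerm K σ) * (ψ : MulAut (FreeGroup (Fin (K + 1)))) * (permAut (extPerm K σ))⁻¹,
    conjA_mem (extPerm K σ) (extPerm_zero K σ) ψ.2⟩

/-- The symmetrization operator `S(ξ) = Σ_{σ ∈ S_K} σ.ξ` on `ℝ[A_K]`. -/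
def symmize (K : ℕ) (ξ : MonoidAlgebra ℝ (Ak K)) : MonoidAlgebra ℝ (Ak K) :=
  ∑ σ : Equiv.Perm (Fin K), MonoidAlgebra.mapDomain (conjPerm K σ) ξ

end PRA

/-!
Conjugating by the automorphism permuting the generators by `σ` sends `Δ_{ij}` to
`Δ_{σ(i)σ(j)}`, so `S(Δ_k^C) = Σ_{s ≤ k} Σ_σ Δ_{0,σ(s)}` and `S(Δ_k^N) = Σ_{i,j ≤ k} Σ_σ Δ_{σ(i)σ(j)}`.
As `σ` runs over `S_K`, `σ(s)` hits every index `(K-1)!` times and, for `i ≠ j`, `(σ(i), σ(j))` hits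
every ordered pair of distinct indices `(K-2)!` times, while the diagonal terms `Δ_{ii}` vanish.
Both counts follow by averaging: summing `Σ_σ g(σ a)` over all `a` gives `K! · Σ g`.
-/

section PermutationSums

open Equiv Finset Nat

variable {α β M : Type*} [DecidableEq α]

theorem exists_perm_apply_pair {a b a' b' : α} (hab : a ≠ b) (hab' : a' ≠ b') :
    ∃ τ : Perm α, τ a = a' ∧ τ b = b' := by
  refine ⟨swap (swap a a' b) b' * swap a a', ?_, by simp [Perm.mul_apply]⟩
  have h : a' ≠ swap a a' b := fun h =>
    hab ((swap a a').injective ((swap_apply_left a a').trans h))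
  rw [Perm.mul_apply, swap_apply_left, swap_apply_of_ne_of_ne h hab']

variable [Fintype α] [Fintype β] [AddCommMonoid M]

theorem sum_perm_apply_eq (g : α → M) (a b : α) :
    ∑ σ : Perm α, g (σ a) = ∑ σ : Perm α, g (σ b) :=
  Fintype.sum_equiv (Equiv.mulRight (swap a b)) _ _ fun σ => by simp [Perm.mul_apply]

theorem card_nsmul_sum_perm_apply (g : α → M) (a : α) :
    Fintype.card α • ∑ σ : Perm α, g (σ a) = (Fintype.card α)! • ∑ b, g b := by
  calc Fintype.card α • ∑ σ : Perm α, g (σ a) = ∑ b : α, ∑ σ : Perm α, g (σ b) := by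
        simp [sum_perm_apply_eq g _ a]
    _ = ∑ σ : Perm α, ∑ b, g (σ b) := sum_comm
    _ = (Fintype.card α)! • ∑ b, g b := by simp [Equiv.sum_comp, Fintype.card_perm]

theorem sum_perm_apply [IsAddTorsionFree M] (g : α → M) (a : α) :
    ∑ σ : Perm α, g (σ a) = (Fintype.card α - 1)! • ∑ b, g b := by
  have hα : Fintype.card α ≠ 0 := (Fintype.card_pos_iff.2 ⟨a⟩).ne'
  refine nsmul_right_injective hα ?_
  dsimp only
  rw [card_nsmul_sum_perm_apply, ← mul_nsmul', mul_factorial_pred hα]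

theorem sum_perm_apply_pair_eq (g : α → α → M) {a b a' b' : α} (hab : a ≠ b) (hab' : a' ≠ b') :
    ∑ σ : Perm α, g (σ a) (σ b) = ∑ σ : Perm α, g (σ a') (σ b') := by
  obtain ⟨τ, ha, hb⟩ := exists_perm_apply_pair hab' hab
  exact Fintype.sum_equiv (Equiv.mulRight τ) _ _ fun σ => by simp [Perm.mul_apply, ha, hb]

theorem card_mul_nsmul_sum_perm_apply_pair (g : α → α → M) (hg : ∀ a, g a a = 0)
    {a b : α} (hab : a ≠ b) :
    (Fintype.card α * (Fintype.card α - 1)) • ∑ σ : Perm α, g (σ a) (σ b)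
      = (Fintype.card α)! • ∑ a', ∑ b', g a' b' := by
  calc (Fintype.card α * (Fintype.card α - 1)) • ∑ σ : Perm α, g (σ a) (σ b)
        = ∑ p ∈ univ.offDiag, ∑ σ : Perm α, g (σ p.1) (σ p.2) := by
          rw [sum_congr rfl fun p hp => sum_perm_apply_pair_eq g (mem_offDiag.1 hp).2.2 hab,
            sum_const, offDiag_card, Finset.card_univ, Nat.mul_sub_one]
    _ = ∑ p : α × α, ∑ σ : Perm α, g (σ p.1) (σ p.2) := by
          refine sum_subset (subset_univ _) fun p _ hp => sum_eq_zero fun σ _ => ?_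
          rw [show p.1 = p.2 by simpa using hp]
          exact hg _
    _ = ∑ σ : Perm α, ∑ a', ∑ b', g a' b' := sum_comm.trans <| sum_congr rfl fun σ _ => by
          rw [Fintype.sum_prod_type, ← Equiv.sum_comp σ (fun a' => ∑ b', g a' b')]
          exact sum_congr rfl fun a' _ => Equiv.sum_comp σ (g (σ a'))
    _ = (Fintype.card α)! • ∑ a', ∑ b', g a' b' := by
          rw [sum_const, Finset.card_univ, Fintype.card_perm]

theorem sum_perm_apply_pair [IsAddTorsionFree M] (g : α → α → M) (hg : ∀ a, g a a = 0)
    {a b : α} (hab : a ≠ b) :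
    ∑ σ : Perm α, g (σ a) (σ b) = (Fintype.card α - 2)! • ∑ a', ∑ b', g a' b' := by
  have h1 : Fintype.card α ≠ 0 := (Fintype.card_pos_iff.2 ⟨a⟩).ne'
  have h2 : Fintype.card α - 1 ≠ 0 := by
    have := Fintype.one_lt_card_iff.2 ⟨a, b, hab⟩; omega
  refine nsmul_right_injective (mul_ne_zero h1 h2) ?_
  dsimp only
  rw [card_mul_nsmul_sum_perm_apply_pair g hg hab, ← mul_nsmul', mul_assoc,
    show Fintype.card α - 2 = Fintype.card α - 1 - 1 by omega, mul_factorial_pred h2,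
    mul_factorial_pred h1]

theorem sum_sum_ite_eq_zero_else_const [DecidableEq β] (c : M) :
    ∑ i : β, ∑ j : β, (if i = j then 0 else c) = ((Fintype.card β - 1) * Fintype.card β) • c := by
  simp [sum_ite, filter_ne, card_erase_of_mem, mul_nsmul]

theorem sum_perm_sum_apply_embedding [IsAddTorsionFree M] (g : α → M) (f : β ↪ α) :
    ∑ σ : Perm α, ∑ i, g (σ (f i)) = ((Fintype.card α - 1)! * Fintype.card β) • ∑ a, g a := by
  rw [sum_comm, sum_congr rfl fun i _ => sum_perm_apply g (f i), sum_const, Finset.card_univ,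
    ← mul_nsmul', mul_comm]

theorem sum_perm_sum_sum_apply_embedding [IsAddTorsionFree M] [DecidableEq β]
    (g : α → α → M) (hg : ∀ a, g a a = 0) (f : β ↪ α) :
    ∑ σ : Perm α, ∑ i, ∑ j, g (σ (f i)) (σ (f j))
      = ((Fintype.card α - 2)! * ((Fintype.card β - 1) * Fintype.card β)) • ∑ a, ∑ b, g a b := by
  have h : ∀ i j, ∑ σ : Perm α, g (σ (f i)) (σ (f j))
      = if i = j then 0 else (Fintype.card α - 2)! • ∑ a, ∑ b, g a b := by
    intro i j
    split_ifs with hij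
    · simp [hij, hg]
    · exact sum_perm_apply_pair g hg (f.injective.ne hij)
  simp_rw [sum_comm (s := (univ : Finset (Perm α))) (t := univ), h]
  rw [sum_sum_ite_eq_zero_else_const, ← mul_nsmul', mul_comm]

end PermutationSums

namespace PRA

open Equiv Finset MonoidAlgebra

variable {K : ℕ}

def conjPermHom (K : ℕ) (σ : Perm (Fin K)) : Ak K →* Ak K where
  toFun := conjPerm K σ
  map_one' := Subtype.ext (by simp [conjPerm])
  map_mul' x y := Subtype.ext (by simp [conjPerm, mul_assoc])

theorem symmize_eq_sum_mapDomainRingHom (ξ : MonoidAlgebra ℝ (Ak K)) :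
    symmize K ξ = ∑ σ : Perm (Fin K), mapDomainRingHom ℝ (conjPermHom K σ) ξ :=
  rfl

theorem gstar_one_sub_of {G : Type*} [Group G] (g : G) :
    gstar (1 - of ℝ G g) = 1 - of ℝ G g⁻¹ := by
  change mapDomainAddEquiv ℝ (Equiv.inv G) (single 1 1 - single g 1) = single 1 1 - single g⁻¹ 1
  rw [map_sub]
  simp only [mapDomainAddEquiv, AddEquiv.coe_mk, Equiv.coe_fn_mk, mapDomain_single,
    Equiv.inv_apply, inv_one]

theorem Del_eq (i j : Fin (K + 1)) (hj : j ≠ 0) :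
    Del K i j hj = (1 - of ℝ (Ak K) (Lg i j hj)) * (1 - of ℝ (Ak K) (Lg i j hj)⁻¹)
      + (1 - of ℝ (Ak K) (Rg i j hj)) * (1 - of ℝ (Ak K) (Rg i j hj)⁻¹) := by
  rw [Del, gstar_one_sub_of, gstar_one_sub_of]

theorem Del_self (i : Fin (K + 1)) (hi : i ≠ 0) : Del K i i hi = 0 := by
  have hL : Lg i i hi = 1 := Subtype.ext (dif_pos rfl)
  have hR : Rg i i hi = 1 := Subtype.ext (dif_pos rfl)
  rw [Del_eq, hL, hR, inv_one, map_one, sub_self]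
  simp

theorem mapDomainRingHom_conjPermHom_Del (σ : Perm (Fin K)) (i j : Fin (K + 1)) (hj : j ≠ 0)
    (hj' : extPerm K σ j ≠ 0) :
    mapDomainRingHom ℝ (conjPermHom K σ) (Del K i j hj)
      = Del K (extPerm K σ i) (extPerm K σ j) hj' := by
  have hL : conjPermHom K σ (Lg i j hj) = Lg (extPerm K σ i) (extPerm K σ j) hj' :=
    Subtype.ext (permAut_conj_nL (extPerm K σ) i j)
  have hR : conjPermHom K σ (Rg i j hj) = Rg (extPerm K σ i) (extPerm K σ j) hj' :=
    Subtype.ext (permAut_conj_nR (extPerm K σ) i j)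
  simp only [Del_eq, map_add, map_mul, map_sub, map_one, of_apply, mapDomainRingHom_apply,
    mapDomain_single, map_inv, hL, hR]

theorem extPerm_succ (σ : Perm (Fin K)) (t : Fin K) : extPerm K σ t.succ = (σ t).succ := by
  simp [extPerm]

/-- `delC K t = Δ_{0,t+1}` and `delN K a b = Δ_{a+1,b+1}`: indexing by `Fin K ≃ {1,…,K}` lets
`S_K` act on the indices directly. -/
def delC (K : ℕ) (t : Fin K) : MonoidAlgebra ℝ (Ak K) :=
  Del K 0 t.succ t.succ_ne_zero

def delN (K : ℕ) (a b : Fin K) : MonoidAlgebra ℝ (Ak K) :=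
  Del K a.succ b.succ b.succ_ne_zero

theorem DelC_eq_sum_delC {m : ℕ} (h : m ≤ K) : DelC K m h = ∑ s, delC K (Fin.castLEEmb h s) :=
  rfl

theorem DelN_eq_sum_delN {m : ℕ} (h : m ≤ K) :
    DelN K m h = ∑ i, ∑ j, delN K (Fin.castLEEmb h i) (Fin.castLEEmb h j) :=
  rfl

theorem delN_self (a : Fin K) : delN K a a = 0 := Del_self _ _

theorem mapDomainRingHom_conjPermHom_delC (σ : Perm (Fin K)) (t : Fin K) :
    mapDomainRingHom ℝ (conjPermHom K σ) (delC K t) = delC K (σ t) := by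
  rw [delC, mapDomainRingHom_conjPermHom_Del σ _ _ _ (by simp [extPerm_succ])]
  simp only [extPerm_zero, extPerm_succ, delC]

theorem mapDomainRingHom_conjPermHom_delN (σ : Perm (Fin K)) (a b : Fin K) :
    mapDomainRingHom ℝ (conjPermHom K σ) (delN K a b) = delN K (σ a) (σ b) := by
  rw [delN, mapDomainRingHom_conjPermHom_Del σ _ _ _ (by simp [extPerm_succ])]
  simp only [extPerm_succ, delN]

end PRA

open PRA in
theorem statement17_general (K k : ℕ) (hkK : k ≤ K) :
    symmize K (DelC K k hkK) = (((K - 1).factorial * k : ℕ) : ℝ) • DelC K K le_rfl ∧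
      symmize K (DelN K k hkK)
        = (((K - 2).factorial * ((k - 1) * k) : ℕ) : ℝ) • DelN K K le_rfl := by
  simp only [Nat.cast_smul_eq_nsmul, symmize_eq_sum_mapDomainRingHom, DelC_eq_sum_delC,
    DelN_eq_sum_delN, map_sum, mapDomainRingHom_conjPermHom_delC,
    mapDomainRingHom_conjPermHom_delN]
  have := IsAddTorsionFree.of_isTorsionFree ℝ (MonoidAlgebra ℝ (Ak K))
  constructor
  · simpa using sum_perm_sum_apply_embedding (delC K) (Fin.castLEEmb hkK)
  · simpa using sum_perm_sum_sum_apply_embedding (delN K) delN_self (Fin.castLEEmb hkK)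

open PRA in
/-- For `2 ≤ k ≤ K`, in `ℝ[A_K]` one has
`S(Δ_k^C) = (K−1)!·k·Δ_K^C` and `S(Δ_k^N) = (K−2)!·(k−1)·k·Δ_K^N`. -/
theorem statement17 (K k : ℕ) (hk : 2 ≤ k) (hkK : k ≤ K) :
    symmize K (DelC K k hkK) = (((K - 1).factorial * k : ℕ) : ℝ) • DelC K K le_rfl ∧
      symmize K (DelN K k hkK)
        = (((K - 2).factorial * ((k - 1) * k) : ℕ) : ℝ) • DelN K K le_rfl :=
  statement17_general K k hkK
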